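/- arXiv:1510.02392 — 5 statements merged into one kernel-verified Lean document; each statement's English description precedes it below -/
import Mathlib

section
/- Let (X,d_X), (Y,d_Y) be separable metric spaces with Borel probability measures μ, ν, and let d be the Hamming average metric on X × Y. Then for all ε, δ > 0: pack_{ε,δ/2}(μ × ν, d) ≥ pack_{√ε,δ}(μ,d_X) · pack_{√ε,δ}(ν,d_Y), where pack_{ε,δ}(μ,d) := min{pack_δ(V,d) : V ⊆ X Borel with μ(V) > 1−ε}. -/
/-!
Given a Borel set `V ⊆ X × Y` with `(μ × ν)(V) > 1 - ε`, Fubini shows that the set `A` of those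
`x` whose slice `V_x` has `ν(V_x) > 1 - √ε` satisfies `μ(A) > 1 - √ε`: otherwise
`(μ × ν)(Vᶜ) ≥ √ε · √ε`. A `δ`-packing `F ⊆ A` together with `δ`-packings `G_x ⊆ V_x` for
`x ∈ F` yields the packing `⋃ x ∈ F, {x} × G_x` of `V`, which is `δ/2`-separated for the Hamming
average metric since two distinct points differ by at least `δ` in one coordinate.
-/

open MeasureTheory

/-- The δ-packing number of a subset `V` with respect to a distance function:
the maximal cardinality of a δ-separated finite subset of `V`. -/
noncomputable def packNumSet {Z : Type*} (dZ : Z → Z → ℝ) (V : Set Z) (δ : ℝ) : ℕ∞ :=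
  ⨆ F : {F : Finset Z // ↑F ⊆ V ∧ ∀ x ∈ F, ∀ y ∈ F, x ≠ y → δ ≤ dZ x y}, (F.1.card : ℕ∞)

/-- The `(ε,δ)`-packing number of a Borel probability measure: the infimum of
`pack_δ(V)` over Borel sets `V` of measure `> 1 - ε`. -/
noncomputable def packNumMeas {Z : Type*} [MeasurableSpace Z] (dZ : Z → Z → ℝ)
    (μ : Measure Z) (ε δ : ℝ) : ℕ∞ :=
  ⨅ V : {V : Set Z // MeasurableSet V ∧ ENNReal.ofReal (1 - ε) < μ V},
    packNumSet dZ V.1 δ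

open scoped ENNReal

namespace ENat

lemma iSup_natCast_le (p : ℕ∞) : ⨆ a : {a : ℕ // (a : ℕ∞) ≤ p}, (a.1 : ℕ∞) = p :=
  le_antisymm (iSup_le fun a => a.2)
    (forall_natCast_le_iff_le.mp fun a ha => le_iSup_of_le ⟨a, ha⟩ le_rfl)

lemma mul_le_of_forall_natCast_le {p q r : ℕ∞}
    (h : ∀ a b : ℕ, (a : ℕ∞) ≤ p → (b : ℕ∞) ≤ q → (a * b : ℕ∞) ≤ r) : p * q ≤ r := by
  rw [← iSup_natCast_le p, ← iSup_natCast_le q, iSup_mul]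
  refine iSup_le fun a => ?_
  rw [mul_iSup]
  exact iSup_le fun b => h a b a.2 b.2

end ENat

section Packing

variable {Z : Type*} {d : Z → Z → ℝ} {V : Set Z} {δ : ℝ}

lemma natCast_card_le_packNumSet {F : Finset Z} (hFV : ↑F ⊆ V)
    (hF : ∀ x ∈ F, ∀ y ∈ F, x ≠ y → δ ≤ d x y) : (F.card : ℕ∞) ≤ packNumSet d V δ := by
  rw [packNumSet]
  exact le_iSup_of_le
    (f := fun F : {F : Finset Z // ↑F ⊆ V ∧ ∀ x ∈ F, ∀ y ∈ F, x ≠ y → δ ≤ d x y} =>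
      (F.1.card : ℕ∞)) ⟨F, hFV, hF⟩ le_rfl

lemma exists_finset_of_natCast_le_packNumSet {n : ℕ} (hn : (n : ℕ∞) ≤ packNumSet d V δ) :
    ∃ F : Finset Z, ↑F ⊆ V ∧ (∀ x ∈ F, ∀ y ∈ F, x ≠ y → δ ≤ d x y) ∧ n ≤ F.card := by
  rcases n with _ | m
  · exact ⟨∅, by simp, by simp, le_rfl⟩
  · have hm : (m : ℕ∞) < packNumSet d V δ :=
      (Nat.cast_lt.mpr m.lt_succ_self).trans_le hn
    obtain ⟨⟨F, hFV, hF⟩, hmF⟩ := lt_iSup_iff.mp hm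
    exact ⟨F, hFV, hF, Nat.cast_lt.mp hmF⟩

lemma packNumSet_mul_le_packNumSet_prod {X Y : Type*} {dX : X → X → ℝ} {dY : Y → Y → ℝ}
    (hdX : ∀ x x', 0 ≤ dX x x') (hdY : ∀ y y', 0 ≤ dY y y') {A : Set X} {V : Set (X × Y)}
    {q : ℕ∞} (hq : ∀ x ∈ A, q ≤ packNumSet dY (Prod.mk x ⁻¹' V) δ) :
    packNumSet dX A δ * q ≤
      packNumSet (fun p p' => (dX p.1 p'.1 + dY p.2 p'.2) / 2) V (δ / 2) := by
  refine ENat.mul_le_of_forall_natCast_le fun a b ha hb => ?_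
  obtain ⟨F, hFA, hFsep, haF⟩ := exists_finset_of_natCast_le_packNumSet ha
  have hslices : ∀ x ∈ F, ∃ G : Finset Y, ↑G ⊆ Prod.mk x ⁻¹' V ∧
      (∀ y ∈ G, ∀ y' ∈ G, y ≠ y' → δ ≤ dY y y') ∧ b ≤ G.card :=
    fun x hx => exists_finset_of_natCast_le_packNumSet (hb.trans (hq x (hFA hx)))
  choose! G hGV hGsep hbG using hslices
  set H := (F.sigma G).map (Equiv.sigmaEquivProd X Y).toEmbedding
  have hmem : ∀ p ∈ H, p.1 ∈ F ∧ p.2 ∈ G p.1 := by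
    simp [H]
  have hcard : a * b ≤ H.card :=
    calc a * b ≤ F.card * b := Nat.mul_le_mul_right b haF
      _ = ∑ _x ∈ F, b := by rw [Finset.sum_const, smul_eq_mul]
      _ ≤ ∑ x ∈ F, (G x).card := Finset.sum_le_sum hbG
      _ = H.card := by rw [Finset.card_map, Finset.card_sigma]
  have hHsep : ∀ p ∈ H, ∀ p' ∈ H, p ≠ p' → δ / 2 ≤ (dX p.1 p'.1 + dY p.2 p'.2) / 2 := by
    rintro ⟨x, y⟩ hp ⟨x', y'⟩ hp' hne
    obtain ⟨hx, hy⟩ := hmem _ hp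
    obtain ⟨hx', hy'⟩ := hmem _ hp'
    by_cases hxx' : x = x'
    · subst hxx'
      have hyy' := hGsep x hx y hy y' hy' fun h => hne (by rw [h])
      linarith [hdX x x]
    · linarith [hFsep x hx x' hx' hxx', hdY y y']
  calc (a * b : ℕ∞) = ((a * b : ℕ) : ℕ∞) := (Nat.cast_mul a b).symm
    _ ≤ H.card := Nat.cast_le.mpr hcard
    _ ≤ _ := natCast_card_le_packNumSet (fun p hp => hGV _ (hmem p hp).1 (hmem p hp).2) hHsep

lemma packNumMeas_le_packNumSet [MeasurableSpace Z] {μ : Measure Z} {ε : ℝ}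
    (hV : MeasurableSet V) (hμV : ENNReal.ofReal (1 - ε) < μ V) :
    packNumMeas d μ ε δ ≤ packNumSet d V δ :=
  iInf_le_of_le (ι := {V : Set Z // MeasurableSet V ∧ ENNReal.ofReal (1 - ε) < μ V})
    (f := fun V => packNumSet d V.1 δ) ⟨V, hV, hμV⟩ le_rfl

lemma le_packNumMeas [MeasurableSpace Z] {μ : Measure Z} {ε : ℝ} {p : ℕ∞}
    (h : ∀ V, MeasurableSet V → ENNReal.ofReal (1 - ε) < μ V → p ≤ packNumSet d V δ) :
    p ≤ packNumMeas d μ ε δ :=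
  le_iInf fun V => h V.1 V.2.1 V.2.2

end Packing

section ProductMeasure

variable {X Y : Type*} [MeasurableSpace X] [MeasurableSpace Y] {μ : Measure X} {ν : Measure Y}
  {V : Set (X × Y)}

lemma measurableSet_setOf_lt_measure_prodMk [SFinite ν] (hV : MeasurableSet V) (t : ℝ≥0∞) :
    MeasurableSet {x | t < ν (Prod.mk x ⁻¹' V)} :=
  measurableSet_lt measurable_const (measurable_measure_prodMk_left hV)

variable [IsProbabilityMeasure μ] [IsProbabilityMeasure ν]

lemma one_sub_mul_one_sub_le_measure_prod_compl (hV : MeasurableSet V) {t : ℝ≥0∞}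
    (ht : μ {x | t < ν (Prod.mk x ⁻¹' V)} ≤ t) : (1 - t) * (1 - t) ≤ μ.prod ν Vᶜ := by
  set A := {x | t < ν (Prod.mk x ⁻¹' V)}
  have hslice : ∀ x ∈ Aᶜ, 1 - t ≤ ν (Prod.mk x ⁻¹' Vᶜ) := fun x hx => by
    simp only [A, Set.mem_compl_iff, Set.mem_ofPred_eq, not_lt] at hx
    rw [Set.preimage_compl, prob_compl_eq_one_sub (measurable_prodMk_left hV)]
    exact tsub_le_tsub_left hx 1
  calc (1 - t) * (1 - t) ≤ (1 - t) * μ Aᶜ := by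
        rw [prob_compl_eq_one_sub (measurableSet_setOf_lt_measure_prodMk hV t)]
        exact mul_le_mul_right (tsub_le_tsub_left ht 1) _
    _ = ∫⁻ _ in Aᶜ, (1 - t) ∂μ := (setLIntegral_const _ _).symm
    _ ≤ ∫⁻ x in Aᶜ, ν (Prod.mk x ⁻¹' Vᶜ) ∂μ :=
        setLIntegral_mono (measurable_measure_prodMk_left hV.compl) hslice
    _ ≤ ∫⁻ x, ν (Prod.mk x ⁻¹' Vᶜ) ∂μ := setLIntegral_le_lintegral _ _
    _ = μ.prod ν Vᶜ := (Measure.prod_apply hV.compl).symm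

lemma lt_measure_setOf_lt_measure_prodMk (hV : MeasurableSet V) {t : ℝ≥0∞}
    (h : 1 - (1 - t) * (1 - t) < μ.prod ν V) : t < μ {x | t < ν (Prod.mk x ⁻¹' V)} := by
  by_contra! ht
  have hcompl := one_sub_mul_one_sub_le_measure_prod_compl hV ht
  rw [prob_compl_eq_one_sub hV] at hcompl
  have := tsub_le_tsub_left hcompl 1
  rw [ENNReal.sub_sub_cancel ENNReal.one_ne_top prob_le_one] at this
  exact h.not_ge this

end ProductMeasure

lemma one_sub_sq_one_sub_ofReal_one_sub_sqrt_le {ε : ℝ} (hε : 0 ≤ ε) :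
    1 - (1 - ENNReal.ofReal (1 - √ε)) * (1 - ENNReal.ofReal (1 - √ε)) ≤
      ENNReal.ofReal (1 - ε) := by
  rcases le_or_gt (√ε) 1 with hs1 | hs1
  · rw [← ENNReal.ofReal_one, ← ENNReal.ofReal_sub _ (by linarith), sub_sub_cancel,
      ← ENNReal.ofReal_mul (Real.sqrt_nonneg ε), Real.mul_self_sqrt hε, ← ENNReal.ofReal_sub _ hε]
  · simp [ENNReal.ofReal_eq_zero.mpr (by linarith : 1 - √ε ≤ 0)]

theorem packNumMeas_prod_ge_general {X Y : Type*} [MetricSpace X] [MetricSpace Y]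
    [MeasurableSpace X] [MeasurableSpace Y]
    (μ : Measure X) (ν : Measure Y) [IsProbabilityMeasure μ] [IsProbabilityMeasure ν]
    (ε δ : ℝ) (hε : 0 < ε) :
    packNumMeas dist μ (Real.sqrt ε) δ * packNumMeas dist ν (Real.sqrt ε) δ ≤
      packNumMeas (fun p q => (dist p.1 q.1 + dist p.2 q.2) / 2) (μ.prod ν) ε (δ / 2) := by
  refine le_packNumMeas fun V hV hμV => ?_
  set t := ENNReal.ofReal (1 - √ε)
  set A := {x | t < ν (Prod.mk x ⁻¹' V)}
  have hμA : t < μ A := lt_measure_setOf_lt_measure_prodMk hV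
    ((one_sub_sq_one_sub_ofReal_one_sub_sqrt_le hε.le).trans_lt hμV)
  calc packNumMeas dist μ √ε δ * packNumMeas dist ν √ε δ
      ≤ packNumSet dist A δ * packNumMeas dist ν √ε δ :=
        mul_le_mul_left
          (packNumMeas_le_packNumSet (measurableSet_setOf_lt_measure_prodMk hV t) hμA) _
    _ ≤ _ := packNumSet_mul_le_packNumSet_prod (fun _ _ => dist_nonneg) (fun _ _ => dist_nonneg)
        fun x hx => packNumMeas_le_packNumSet (measurable_prodMk_left hV) hx

/-- **Packing numbers of product measures:**
`pack_{ε,δ/2}(μ × ν, d) ≥ pack_{√ε,δ}(μ,d_X) · pack_{√ε,δ}(ν,d_Y)`,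
where `d` is the Hamming average metric on `X × Y`. -/
theorem packNumMeas_prod_ge {X Y : Type*} [MetricSpace X] [MetricSpace Y]
    [TopologicalSpace.SeparableSpace X] [TopologicalSpace.SeparableSpace Y]
    [MeasurableSpace X] [BorelSpace X] [MeasurableSpace Y] [BorelSpace Y]
    (μ : Measure X) (ν : Measure Y) [IsProbabilityMeasure μ] [IsProbabilityMeasure ν]
    (ε δ : ℝ) (hε : 0 < ε) (hδ : 0 < δ) :
    packNumMeas dist μ (Real.sqrt ε) δ * packNumMeas dist ν (Real.sqrt ε) δ ≤
      packNumMeas (fun p q => (dist p.1 q.1 + dist p.2 q.2) / 2) (μ.prod ν) ε (δ / 2) :=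
  packNumMeas_prod_ge_general μ ν ε δ hε
end

section
/- Let (X,d_X), (Y,d_Y) be separable metric spaces with Borel probability measures μ, ν, and d the Hamming average metric on X×Y. Then for all ε, δ > 0: cov_{ε,δ/4}(μ × ν, d) ≥ cov_{√ε,δ}(μ,d_X) · cov_{√ε,δ}(ν,d_Y). -/
/-!
Let `U` be the `δ/4`-neighbourhood of a finite `F ⊆ X × Y` with `(μ × ν)(U) > 1 - ε`.
By a reverse Markov inequality, the set `G` of points `x` whose fibre `U_x` has `ν`-measure
`> 1 - √ε` has `μ`-measure `> 1 - √ε`. For `x ∈ G` the fibre `U_x` lies in the `δ`-neighbourhood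
of the second coordinates of `F_x = {q ∈ F | d(q.1, x) < δ/2}`, so `#F_x ≥ cov(ν)`. A maximal
`δ`-separated `T ⊆ G` covers `G` by `δ`-balls, so `#T ≥ cov(μ)`, while the sets `F_t`, `t ∈ T`,
are pairwise disjoint, so `#T · cov(ν) ≤ #F`.
-/

open MeasureTheory

/-- The `(ε,δ)`-covering number of a Borel probability measure with respect to a
distance function `dZ`: the minimal cardinality of a finite set `F` whose open
δ-neighbourhood has measure `> 1 - ε`. -/
noncomputable def covNumMeas {Z : Type*} [MeasurableSpace Z] (dZ : Z → Z → ℝ)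
    (μ : Measure Z) (ε δ : ℝ) : ℕ∞ :=
  ⨅ F : {F : Finset Z // ENNReal.ofReal (1 - ε) < μ {z | ∃ x ∈ F, dZ x z < δ}},
    (F.1.card : ℕ∞)

open scoped ENNReal

section Markov

variable {α : Type*} [MeasurableSpace α] {μ : Measure α} [IsProbabilityMeasure μ]
  {f : α → ℝ≥0∞}

theorem lt_measure_setOf_lt_of_lt_lintegral (hf : ∀ x, f x ≤ 1) {a : ℝ≥0∞}
    (h : (1 - a) * a + a < ∫⁻ x, f x ∂μ) : a < μ {x | a < f x} := by
  by_contra! hG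
  refine h.not_ge ?_
  calc ∫⁻ x, f x ∂μ ≤ ∫⁻ x, ({x | a < f x}.indicator (fun _ => 1 - a) x + a) ∂μ := by
        refine lintegral_mono fun x => ?_
        by_cases hx : a < f x
        · simpa [hx] using (hf x).trans le_tsub_add
        · simpa [hx] using not_lt.1 hx
    _ = ∫⁻ x, {x | a < f x}.indicator (fun _ => 1 - a) x ∂μ + a := by
        rw [lintegral_add_right _ measurable_const, lintegral_const, measure_univ, mul_one]
    _ ≤ (1 - a) * μ {x | a < f x} + a := by gcongr; exact lintegral_indicator_const_le _ _
    _ ≤ (1 - a) * a + a := by gcongr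

theorem ofReal_one_sub_lt_measure_setOf_lt (hf : ∀ x, f x ≤ 1) {s : ℝ} (hs : 0 ≤ s)
    (h : ENNReal.ofReal (1 - s ^ 2) < ∫⁻ x, f x ∂μ) :
    ENNReal.ofReal (1 - s) < μ {x | ENNReal.ofReal (1 - s) < f x} := by
  refine lt_measure_setOf_lt_of_lt_lintegral hf (lt_of_le_of_lt ?_ h)
  rcases le_total s 1 with hs1 | hs1
  · rw [← ENNReal.ofReal_one, ← ENNReal.ofReal_sub _ (sub_nonneg.2 hs1),
      ← ENNReal.ofReal_mul (by linarith), ← ENNReal.ofReal_add (by nlinarith) (by linarith)]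
    exact ENNReal.ofReal_le_ofReal (by nlinarith)
  · simp [ENNReal.ofReal_of_nonpos (sub_nonpos.2 hs1)]

end Markov

section CovNumMeas

variable {Z : Type*} [MeasurableSpace Z] {dZ : Z → Z → ℝ} {μ : Measure Z} {ε δ : ℝ}

theorem covNumMeas_le_card {s : Set Z} {F : Finset Z} (hs : ENNReal.ofReal (1 - ε) < μ s)
    (hsF : s ⊆ {z | ∃ x ∈ F, dZ x z < δ}) : covNumMeas dZ μ ε δ ≤ F.card :=
  iInf_le_of_le ⟨F, hs.trans_le (measure_mono hsF)⟩ le_rfl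

theorem one_le_covNumMeas : 1 ≤ covNumMeas dZ μ ε δ :=
  le_iInf fun ⟨F, hF⟩ => by
    rcases F.eq_empty_or_nonempty with rfl | hne
    · simp at hF
    · exact_mod_cast hne.card_pos

end CovNumMeas

section Separated

variable {X : Type*} [PseudoMetricSpace X] {δ : ℝ}

theorem exists_separated_finset_covering (hδ : 0 < δ) {G : Set X} {N : ℕ}
    (hN : ∀ T : Finset X, ↑T ⊆ G → (T : Set X).Pairwise (δ ≤ dist · ·) → T.card ≤ N) :
    ∃ T : Finset X, ↑T ⊆ G ∧ (T : Set X).Pairwise (δ ≤ dist · ·) ∧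
      G ⊆ {x | ∃ t ∈ T, dist t x < δ} := by
  set S := {T : Finset X | ↑T ⊆ G ∧ (T : Set X).Pairwise (δ ≤ dist · ·)}
  have hbdd : BddAbove (Finset.card '' S) := ⟨N, by rintro _ ⟨T, hT, rfl⟩; exact hN T hT.1 hT.2⟩
  classical
  obtain ⟨T, ⟨hTG, hTsep⟩, hTmax⟩ := Nat.sSup_mem (Set.Nonempty.image _ ⟨∅, by simp [S]⟩) hbdd
  refine ⟨T, hTG, hTsep, fun x hxG => ?_⟩
  rw [Set.mem_ofPred_eq]
  by_contra! hfar
  have hxT : x ∉ T := fun hxT => (hfar x hxT).not_gt (by simpa using hδ)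
  have hsep : ((insert x T : Finset X) : Set X).Pairwise (δ ≤ dist · ·) := by
    rw [Finset.coe_insert, Set.pairwise_insert_of_notMem hxT]
    exact ⟨hTsep, fun t ht => ⟨dist_comm x t ▸ hfar t ht, hfar t ht⟩⟩
  have hxTG : ↑(insert x T) ⊆ G := by simpa [Set.insert_subset_iff] using ⟨hxG, hTG⟩
  have hle := le_csSup hbdd ⟨insert x T, ⟨hxTG, hsep⟩, rfl⟩
  rw [Finset.card_insert_of_notMem hxT, hTmax] at hle
  omega

theorem sum_card_filter_dist_lt_half_le_card {α : Type*} (F : Finset α) (f : α → X)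
    {T : Finset X} (hT : (T : Set X).Pairwise (δ ≤ dist · ·)) :
    ∑ t ∈ T, (F.filter fun a => dist (f a) t < δ / 2).card ≤ F.card := by
  classical
  rw [← Finset.card_biUnion]
  · exact Finset.card_le_card (Finset.biUnion_subset.2 fun t _ => Finset.filter_subset _ _)
  · intro t₁ h₁ t₂ h₂ hne
    refine Finset.disjoint_filter.2 fun a _ h1 h2 => ?_
    have := hT h₁ h₂ hne
    have := dist_triangle_left t₁ t₂ (f a)
    linarith

end Separated

section Product

variable {X Y : Type*} [PseudoMetricSpace X] [PseudoMetricSpace Y]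

theorem measurableSet_setOf_exists_dist_add_dist_lt [MeasurableSpace X] [OpensMeasurableSpace X]
    [MeasurableSpace Y] [OpensMeasurableSpace Y] (F : Finset (X × Y)) (r : ℝ) :
    MeasurableSet {z : X × Y | ∃ q ∈ F, (dist q.1 z.1 + dist q.2 z.2) / 2 < r} := by
  rw [show {z : X × Y | ∃ q ∈ F, (dist q.1 z.1 + dist q.2 z.2) / 2 < r} =
      ⋃ q ∈ F, {z | (dist q.1 z.1 + dist q.2 z.2) / 2 < r} by ext; simp]
  refine Finset.measurableSet_biUnion F fun q _ => ?_
  have h1 : Measurable fun z : X × Y => dist q.1 z.1 :=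
    (continuous_const.dist continuous_id).measurable.comp measurable_fst
  have h2 : Measurable fun z : X × Y => dist q.2 z.2 :=
    (continuous_const.dist continuous_id).measurable.comp measurable_snd
  exact measurableSet_lt ((h1.add h2).div_const 2) measurable_const

theorem prodMk_preimage_subset_nbhd_snd [DecidableEq Y] (F : Finset (X × Y)) (x : X) (δ : ℝ) :
    Prod.mk x ⁻¹' {z | ∃ q ∈ F, (dist q.1 z.1 + dist q.2 z.2) / 2 < δ / 4} ⊆
      {y | ∃ b ∈ (F.filter fun q => dist q.1 x < δ / 2).image Prod.snd, dist b y < δ} := by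
  intro y hy
  obtain ⟨q, hqF, hq⟩ : ∃ q ∈ F, (dist q.1 x + dist q.2 y) / 2 < δ / 4 := hy
  have := dist_nonneg (x := q.1) (y := x)
  have := dist_nonneg (x := q.2) (y := y)
  exact ⟨q.2, Finset.mem_image_of_mem _ (Finset.mem_filter.2 ⟨hqF, by linarith⟩), by linarith⟩

end Product

theorem covNumMeas_prod_ge_general {X Y : Type*} [MetricSpace X] [MetricSpace Y]
    [MeasurableSpace X] [BorelSpace X] [MeasurableSpace Y] [BorelSpace Y]
    (μ : Measure X) (ν : Measure Y) [IsProbabilityMeasure μ] [IsProbabilityMeasure ν]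
    (ε δ : ℝ) (hε : 0 < ε) (hδ : 0 < δ) :
    covNumMeas dist μ (Real.sqrt ε) δ * covNumMeas dist ν (Real.sqrt ε) δ ≤
      covNumMeas (fun p q => (dist p.1 q.1 + dist p.2 q.2) / 2) (μ.prod ν) ε (δ / 4) := by
  classical
  refine le_iInf fun ⟨F, hF⟩ => ?_
  set U := {z : X × Y | ∃ q ∈ F, (dist q.1 z.1 + dist q.2 z.2) / 2 < δ / 4}
  set G := {x | ENNReal.ofReal (1 - √ε) < ν (Prod.mk x ⁻¹' U)}
  set Fx : X → Finset (X × Y) := fun x => F.filter fun q => dist q.1 x < δ / 2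
  have hμG : ENNReal.ofReal (1 - √ε) < μ G := by
    refine ofReal_one_sub_lt_measure_setOf_lt (fun _ => prob_le_one) (Real.sqrt_nonneg ε) ?_
    rwa [Real.sq_sqrt hε.le,
      ← Measure.prod_apply (measurableSet_setOf_exists_dist_add_dist_lt F _)]
  have hcovY : ∀ x ∈ G, covNumMeas dist ν √ε δ ≤ (Fx x).card := fun x hx =>
    (covNumMeas_le_card hx (prodMk_preimage_subset_nbhd_snd F x δ)).trans
      (by exact_mod_cast Finset.card_image_le)
  obtain ⟨T, hTG, hTsep, hGT⟩ := exists_separated_finset_covering hδ (N := F.card)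
    fun T hTG hTsep => calc
      T.card = ∑ t ∈ T, 1 := by simp
      _ ≤ ∑ t ∈ T, (Fx t).card := Finset.sum_le_sum fun t ht => by
          exact_mod_cast one_le_covNumMeas.trans (hcovY t (hTG ht))
      _ ≤ F.card := sum_card_filter_dist_lt_half_le_card F Prod.fst hTsep
  calc covNumMeas dist μ √ε δ * covNumMeas dist ν √ε δ
      ≤ T.card * covNumMeas dist ν √ε δ := by gcongr; exact covNumMeas_le_card hμG hGT
    _ = ∑ t ∈ T, covNumMeas dist ν √ε δ := by simp
    _ ≤ ∑ t ∈ T, ((Fx t).card : ℕ∞) := Finset.sum_le_sum fun t ht => hcovY t (hTG ht)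
    _ ≤ F.card := by exact_mod_cast sum_card_filter_dist_lt_half_le_card F Prod.fst hTsep

/-- **Covering numbers of product measures:**
`cov_{ε,δ/4}(μ × ν, d) ≥ cov_{√ε,δ}(μ,d_X) · cov_{√ε,δ}(ν,d_Y)`,
where `d` is the Hamming average metric on `X × Y`. -/
theorem covNumMeas_prod_ge {X Y : Type*} [MetricSpace X] [MetricSpace Y]
    [TopologicalSpace.SeparableSpace X] [TopologicalSpace.SeparableSpace Y]
    [MeasurableSpace X] [BorelSpace X] [MeasurableSpace Y] [BorelSpace Y]
    (μ : Measure X) (ν : Measure Y) [IsProbabilityMeasure μ] [IsProbabilityMeasure ν]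
    (ε δ : ℝ) (hε : 0 < ε) (hδ : 0 < δ) :
    covNumMeas dist μ (Real.sqrt ε) δ * covNumMeas dist ν (Real.sqrt ε) δ ≤
      covNumMeas (fun p q => (dist p.1 q.1 + dist p.2 q.2) / 2) (μ.prod ν) ε (δ / 4) :=
  covNumMeas_prod_ge_general μ ν ε δ hε hδ
end

section
/- Let (X,μ) be a probability space, H a real Hilbert space, a : X → H strongly (Bochner) measurable and bounded, and b ∈ H with ‖b‖ ≤ 1. Then ∫ |⟨a(x),b⟩| dμ(x) ≤ sqrt( ∬ |⟨a(x),a(x')⟩| dμ(x) dμ(x') ). -/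
/-!
Let `ε x = ±1` be the sign of `⟪a x, b⟫` and `f = ε • a`. Then `∫ |⟪a x, b⟫| = ⟪b, ∫ f⟫ ≤ ‖∫ f‖`,
and `‖∫ f‖² = ∫∫ ⟪f x, f x'⟫ ≤ ∫∫ |⟪f x, f x'⟫| = ∫∫ |⟪a x, a x'⟫|`. The Bochner integral needs a
complete target, so the argument runs in the completion of `H`.
-/

open MeasureTheory
open scoped RealInnerProductSpace

section

variable {X E : Type*} [MeasurableSpace X] [NormedAddCommGroup E] [InnerProductSpace ℝ E]
  {μ : Measure X} {g : X → E}

lemma integrable_prod_abs_inner (hg : Integrable g μ) :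
    Integrable (fun p : X × X => |⟪g p.1, g p.2⟫|) (μ.prod μ) := by
  refine (hg.norm.mul_prod hg.norm).mono' ?_ (ae_of_all _ fun p => ?_)
  · exact continuous_abs.comp_aestronglyMeasurable
      (hg.aestronglyMeasurable.comp_fst.inner hg.aestronglyMeasurable.comp_snd)
  · rw [Real.norm_eq_abs, abs_abs]
    exact abs_real_inner_le_norm _ _

lemma sq_norm_integral_le_integral_integral_abs_inner [CompleteSpace E] [SFinite μ]
    (hg : Integrable g μ) :
    ‖∫ x, g x ∂μ‖ ^ 2 ≤ ∫ x, ∫ x', |⟪g x, g x'⟫| ∂μ ∂μ := by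
  have inner_integral_le (x : X) : ⟪∫ x', g x' ∂μ, g x⟫ ≤ ∫ x', |⟪g x, g x'⟫| ∂μ := by
    rw [real_inner_comm, ← integral_inner hg]
    exact integral_mono (hg.const_inner _) (hg.const_inner _).abs fun _ => le_abs_self _
  calc ‖∫ x, g x ∂μ‖ ^ 2 = ∫ x, ⟪∫ x', g x' ∂μ, g x⟫ ∂μ := by
        rw [← real_inner_self_eq_norm_sq, integral_inner hg]
    _ ≤ ∫ x, ∫ x', |⟪g x, g x'⟫| ∂μ ∂μ :=
        integral_mono (hg.const_inner _) (integrable_prod_abs_inner hg).integral_prod_left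
          inner_integral_le

lemma integral_abs_inner_le_sqrt_of_integrable [CompleteSpace E] [SFinite μ]
    (hg : Integrable g μ) {b : E} (hb : ‖b‖ ≤ 1) :
    ∫ x, |⟪g x, b⟫| ∂μ ≤ √(∫ x, ∫ x', |⟪g x, g x'⟫| ∂μ ∂μ) := by
  set ε : X → ℝ := fun x => if 0 ≤ ⟪g x, b⟫ then 1 else -1
  have abs_ε (x : X) : |ε x| = 1 := by
    by_cases h : 0 ≤ ⟪g x, b⟫ <;> simp [ε, h]
  have hε : AEStronglyMeasurable ε μ :=
    ((measurable_const.ite measurableSet_Ici measurable_const).comp_aemeasurable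
      (hg.aestronglyMeasurable.inner_const (c := b)).aemeasurable).aestronglyMeasurable
  set f : X → E := fun x => ε x • g x
  have hf : Integrable f μ := hg.bdd_smul 1 hε (ae_of_all _ fun x => (abs_ε x).le)
  have inner_f (x : X) : ⟪b, f x⟫ = |⟪g x, b⟫| := by
    rw [real_inner_smul_right, real_inner_comm]
    by_cases h : 0 ≤ ⟪g x, b⟫
    · simp [ε, h, abs_of_nonneg h]
    · simp [ε, h, abs_of_neg (not_le.mp h)]
  have abs_inner_f (x x' : X) : |⟪f x, f x'⟫| = |⟪g x, g x'⟫| := by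
    simp only [f, real_inner_smul_left, real_inner_smul_right, abs_mul, abs_ε, one_mul]
  calc ∫ x, |⟪g x, b⟫| ∂μ = ⟪b, ∫ x, f x ∂μ⟫ := by
        simp_rw [← inner_f]
        exact integral_inner hf b
    _ ≤ ‖∫ x, f x ∂μ‖ :=
        (real_inner_le_norm _ _).trans (mul_le_of_le_one_left (norm_nonneg _) hb)
    _ ≤ √(∫ x, ∫ x', |⟪f x, f x'⟫| ∂μ ∂μ) :=
        Real.le_sqrt_of_sq_le (sq_norm_integral_le_integral_integral_abs_inner hf)
    _ = √(∫ x, ∫ x', |⟪g x, g x'⟫| ∂μ ∂μ) := by simp_rw [abs_inner_f]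

end

/-- **A Cauchy–Bunyakowski–Schwartz consequence.**
For a bounded strongly measurable `a : X → H` into a real Hilbert space and
`b ∈ H` with `‖b‖ ≤ 1`,
`∫ |⟨a(x),b⟩| dμ(x) ≤ sqrt(∬ |⟨a(x),a(x')⟩| dμ(x) dμ(x'))`. -/
theorem integral_abs_inner_le_sqrt {X H : Type*} [MeasurableSpace X]
    [NormedAddCommGroup H] [InnerProductSpace ℝ H]
    (μ : Measure X) [IsProbabilityMeasure μ]
    (a : X → H) (ha : StronglyMeasurable a) (C : ℝ) (hC : ∀ x, ‖a x‖ ≤ C)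
    (b : H) (hb : ‖b‖ ≤ 1) :
    (∫ x, |(inner ℝ (a x) b : ℝ)| ∂μ) ≤
      Real.sqrt (∫ x, ∫ x', |(inner ℝ (a x) (a x') : ℝ)| ∂μ ∂μ) := by
  have ha' : Integrable (fun x => (a x : UniformSpace.Completion H)) μ :=
    Integrable.of_bound ((UniformSpace.Completion.continuous_coe H).comp_aestronglyMeasurable
      ha.aestronglyMeasurable) C
      (ae_of_all _ fun x => (UniformSpace.Completion.norm_coe (a x)).trans_le (hC x))
  have hb' : ‖(b : UniformSpace.Completion H)‖ ≤ 1 :=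
    (UniformSpace.Completion.norm_coe b).trans_le hb
  simpa only [UniformSpace.Completion.inner_coe] using
    integral_abs_inner_le_sqrt_of_integrable ha' hb'
end

section
/- Let (X,d_X) and (Y,d_Y) be compact metric spaces, μ a Borel probability measure on X, and φ : X → Y a Borel map. Then for every η > 0 there exists a Borel map ψ : X → Y such that: (i) ∫ d_Y(φ(x),ψ(x)) dμ(x) < η, and (ii) there is an open set U ⊆ X with μ(U) > 1−η such that the restriction ψ|U is η-almost L-Lipschitz for some L < ∞. -/
/-!
Approximate `φ` within `ε / 2` by a simple function (nearest points of a finite net of `Y`).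
By inner regularity, each of its finitely many fibres contains a compact set carrying almost all
of its measure; these compacts are pairwise at positive distance, so on their union `K` the map
`φ` oscillates by less than `ε` at some scale `δ`. Composing `φ` with a nearest-point map onto a
finite `δ / 3`-net of `K` gives a simple function `ψ` that is `ε`-close to `φ` on `K` and
oscillates by less than `ε` at scale `δ / 3` on an open neighbourhood `U` of `K`. Bounded
oscillation at a fixed scale is almost Lipschitz, with `L = 3 diam Y / δ`.
-/

open MeasureTheory Metric Set Filter Topology Function

section Approximation

variable {X Y : Type*} [MetricSpace X] [MetricSpace Y]

theorem exists_pos_eq_of_dist_lt_of_pairwise_disjoint {ι : Type*} [Finite ι] {K : ι → Set X}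
    (hK : ∀ i, IsCompact (K i)) (hdisj : Pairwise (Disjoint on K)) :
    ∃ δ > 0, ∀ i j, ∀ x ∈ K i, ∀ x' ∈ K j, dist x x' < δ → i = j := by
  have hpair : ∀ i j, ∀ᶠ δ in 𝓝[>] (0 : ℝ), ∀ x ∈ K i, ∀ x' ∈ K j, dist x x' < δ → i = j := by
    intro i j
    by_cases hij : i = j
    · exact Eventually.of_forall fun _ _ _ _ _ _ => hij
    obtain ⟨r, hr, hsep⟩ := exists_pos_forall_lt_edist (hK i) (hK j).isClosed (hdisj hij)
    filter_upwards [Ioo_mem_nhdsGT (NNReal.coe_pos.2 hr)] with δ hδ x hx x' hx' hxx'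
    have hrx := hsep x hx x' hx'
    rw [edist_dist, ← ENNReal.ofReal_coe_nnreal,
      ENNReal.ofReal_lt_ofReal_iff_of_nonneg r.coe_nonneg] at hrx
    linarith [hδ.2]
  obtain ⟨δ, hδ, hδpos⟩ :=
    (eventually_all.2 fun i => eventually_all.2 (hpair i)).and self_mem_nhdsWithin |>.exists
  exact ⟨δ, hδpos, hδ⟩

theorem IsCompact.exists_simpleFunc_almost_retraction [MeasurableSpace X] [OpensMeasurableSpace X]
    {K : Set X} (hK : IsCompact K) (hne : K.Nonempty) {ε : ℝ} (hε : 0 < ε) :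
    ∃ g : SimpleFunc X X, (∀ x, g x ∈ K) ∧
      ∃ U, IsOpen U ∧ K ⊆ U ∧ ∀ x ∈ U, dist x (g x) < ε := by
  have := hK.isSeparable.separableSpace
  have := hne.to_subtype
  obtain ⟨e, he⟩ := TopologicalSpace.exists_dense_seq K
  obtain ⟨t, ht⟩ := hK.elim_finite_subcover (fun n => ball (e n : X) ε) (fun _ => isOpen_ball)
    fun x hx => mem_iUnion.2 (he.exists_dist_lt ⟨x, hx⟩ hε)
  refine ⟨SimpleFunc.nearestPt (fun n => (e n : X)) (t.sup id), fun x => (e _).2,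
    ⋃ n ∈ t, ball (e n : X) ε, isOpen_biUnion fun _ _ => isOpen_ball, ht, fun x hx => ?_⟩
  obtain ⟨n, hn, hxn⟩ := mem_iUnion₂.1 hx
  rw [dist_comm, ← edist_lt_ofReal]
  exact (SimpleFunc.edist_nearestPt_le _ x (Finset.le_sup (f := id) hn)).trans_lt
    (edist_lt_ofReal.2 (by rwa [dist_comm]))

theorem MeasureTheory.SimpleFunc.exists_isCompact_measure_compl_lt_and_eq_of_dist_lt
    [MeasurableSpace X] [BorelSpace X] [CompactSpace X] {ι : Type*} (μ : Measure X)
    [IsFiniteMeasure μ] (c : SimpleFunc X ι) {ε : ENNReal} (hε : ε ≠ 0) :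
    ∃ K, IsCompact K ∧ μ Kᶜ < ε ∧
      ∃ δ > 0, ∀ x ∈ K, ∀ x' ∈ K, dist x x' < δ → c x = c x' := by
  obtain ⟨ε', hε'pos, hε'⟩ := ENNReal.exists_pos_sum_of_countable hε c.range
  choose F hFsub hFclosed hFμ using fun i : c.range =>
    (c.measurableSet_fiber i).exists_isClosed_sdiff_lt (measure_ne_top μ _)
      (ENNReal.coe_ne_zero.2 (hε'pos i).ne')
  obtain ⟨δ, hδ, hsep⟩ := exists_pos_eq_of_dist_lt_of_pairwise_disjoint
    (fun i => (hFclosed i).isCompact) fun i j hij =>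
      ((disjoint_singleton.2 (Subtype.coe_injective.ne hij)).preimage c).mono (hFsub i) (hFsub j)
  refine ⟨⋃ i, F i, isCompact_iUnion fun i => (hFclosed i).isCompact, ?_, δ, hδ, ?_⟩
  · have hcompl : (⋃ i, F i)ᶜ ⊆ ⋃ i : c.range, c ⁻¹' {(i : ι)} \ F i := fun x hx =>
      mem_iUnion.2 ⟨⟨c x, c.mem_range_self x⟩, rfl, fun hxF => hx (mem_iUnion_of_mem _ hxF)⟩
    calc μ (⋃ i, F i)ᶜ ≤ ∑' i : c.range, μ (c ⁻¹' {(i : ι)} \ F i) :=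
          (measure_mono hcompl).trans (measure_iUnion_le _)
      _ ≤ ∑' i, (ε' i : ENNReal) := ENNReal.tsum_le_tsum fun i => (hFμ i).le
      _ < ε := hε'
  · intro x hx x' hx' hxx'
    obtain ⟨i, hxi⟩ := mem_iUnion.1 hx
    obtain ⟨j, hx'j⟩ := mem_iUnion.1 hx'
    rw [hFsub i hxi, hFsub j hx'j, hsep i j x hxi x' hx'j hxx']

theorem exists_isCompact_measure_compl_lt_and_dist_lt_of_measurable [MeasurableSpace X]
    [BorelSpace X] [CompactSpace X] [MeasurableSpace Y] [OpensMeasurableSpace Y] [CompactSpace Y]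
    [Nonempty Y] (μ : Measure X) [IsFiniteMeasure μ] {φ : X → Y} (hφ : Measurable φ) {ε : ℝ}
    (hε : 0 < ε) {ε' : ENNReal} (hε' : ε' ≠ 0) :
    ∃ K, IsCompact K ∧ μ Kᶜ < ε' ∧
      ∃ δ > 0, ∀ x ∈ K, ∀ x' ∈ K, dist x x' < δ → dist (φ x) (φ x') < ε := by
  obtain ⟨g, -, U, -, hU, hg⟩ :=
    (isCompact_univ (X := Y)).exists_simpleFunc_almost_retraction univ_nonempty (half_pos hε)
  obtain ⟨K, hK, hKμ, δ, hδ, hgK⟩ :=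
    (g.comp φ hφ).exists_isCompact_measure_compl_lt_and_eq_of_dist_lt μ hε'
  refine ⟨K, hK, hKμ, δ, hδ, fun x hx x' hx' hxx' => ?_⟩
  have hgx : g (φ x) = g (φ x') := hgK x hx x' hx' hxx'
  calc dist (φ x) (φ x') ≤ dist (φ x) (g (φ x)) + dist (φ x') (g (φ x')) := by
        rw [hgx]; exact dist_triangle_right ..
    _ < ε / 2 + ε / 2 := add_lt_add (hg _ (hU trivial)) (hg _ (hU trivial))
    _ = ε := add_halves ε

theorem IsCompact.exists_simpleFunc_dist_lt_of_dist_lt [MeasurableSpace X]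
    [OpensMeasurableSpace X] [MeasurableSpace Y] [Nonempty Y] {K : Set X} (hK : IsCompact K)
    {φ : X → Y} {δ ε : ℝ} (hδ : 0 < δ)
    (hφ : ∀ x ∈ K, ∀ x' ∈ K, dist x x' < δ → dist (φ x) (φ x') < ε) :
    ∃ ψ : SimpleFunc X Y, (∀ x ∈ K, dist (φ x) (ψ x) < ε) ∧ ∃ U, IsOpen U ∧ K ⊆ U ∧
      ∀ x ∈ U, ∀ x' ∈ U, dist x x' < δ / 3 → dist (ψ x) (ψ x') < ε := by
  rcases K.eq_empty_or_nonempty with rfl | hne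
  · exact ⟨SimpleFunc.const X (Classical.arbitrary Y), by simp, ∅, isOpen_empty, subset_rfl,
      by simp⟩
  obtain ⟨g, hgK, U, hU, hKU, hg⟩ :=
    hK.exists_simpleFunc_almost_retraction hne (div_pos hδ three_pos)
  refine ⟨g.map φ, fun x hx => hφ x hx _ (hgK x) ((hg x (hKU hx)).trans (by linarith)), U, hU,
    hKU, fun x hx x' hx' hxx' => hφ _ (hgK x) _ (hgK x') ?_⟩
  calc dist (g x) (g x') ≤ dist x (g x) + dist x x' + dist x' (g x') := by
        rw [dist_comm x]; exact dist_triangle4 ..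
    _ < δ / 3 + δ / 3 + δ / 3 := add_lt_add (add_lt_add (hg x hx) hxx') (hg x' hx')
    _ = δ := by ring

end Approximation

section AlmostLipschitz

variable {X Y : Type*} [PseudoMetricSpace X] [PseudoMetricSpace Y]

theorem dist_le_add_div_mul_of_dist_lt {ψ : X → Y} {U : Set X} {η r D : ℝ} (hr : 0 < r)
    (hD : ∀ x ∈ U, ∀ x' ∈ U, dist (ψ x) (ψ x') ≤ D)
    (hloc : ∀ x ∈ U, ∀ x' ∈ U, dist x x' < r → dist (ψ x) (ψ x') ≤ η) :
    ∀ x ∈ U, ∀ x' ∈ U, dist (ψ x) (ψ x') ≤ η + D / r * dist x x' := by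
  intro x hx x' hx'
  have hη : 0 ≤ η := dist_nonneg.trans (hloc x hx x hx (by rwa [dist_self]))
  have hD0 : 0 ≤ D := dist_nonneg.trans (hD x hx x hx)
  rcases lt_or_ge (dist x x') r with hxx' | hxx'
  · have : 0 ≤ D / r * dist x x' := by positivity
    linarith [hloc x hx x' hx' hxx']
  · calc dist (ψ x) (ψ x') ≤ D := hD x hx x' hx'
      _ = D / r * r := (div_mul_cancel₀ D hr.ne').symm
      _ ≤ D / r * dist x x' := by gcongr
      _ ≤ η + D / r * dist x x' := le_add_of_nonneg_left hη

end AlmostLipschitz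

section Probability

variable {X : Type*} [MeasurableSpace X] {μ : Measure X}

theorem integral_le_mul_measureReal_add_mul_measureReal_compl [IsFiniteMeasure μ] {f : X → ℝ}
    (hf : AEStronglyMeasurable f μ) {K : Set X} (hK : MeasurableSet K) {a b : ℝ}
    (ha : ∀ x ∈ K, ‖f x‖ ≤ a) (hb : ∀ x ∈ Kᶜ, ‖f x‖ ≤ b) :
    ∫ x, f x ∂μ ≤ a * μ.real K + b * μ.real Kᶜ := by
  have hbound : ∀ x, ‖f x‖ ≤ max a b := fun x => by
    by_cases hx : x ∈ K
    · exact (ha x hx).trans (le_max_left a b)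
    · exact (hb x hx).trans (le_max_right a b)
  rw [← integral_add_compl hK (Integrable.of_bound hf _ (ae_of_all _ hbound))]
  exact add_le_add
    ((Real.le_norm_self _).trans (norm_setIntegral_le_of_norm_le_const (measure_lt_top μ K) ha))
    ((Real.le_norm_self _).trans (norm_setIntegral_le_of_norm_le_const (measure_lt_top μ _) hb))

theorem ofReal_one_sub_lt_measure_of_measureReal_compl_lt [IsProbabilityMeasure μ] {K : Set X}
    (hK : MeasurableSet K) {η : ℝ} (hη : μ.real Kᶜ < min η 1) :
    ENNReal.ofReal (1 - η) < μ K := by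
  have hKc := probReal_compl_eq_one_sub (μ := μ) hK
  rw [← ofReal_measureReal]
  exact ENNReal.ofReal_lt_ofReal_iff'.2
    ⟨by linarith [min_le_left η 1], by linarith [min_le_right η 1]⟩

end Probability

/-- **Existence of almost Lipschitz approximations (Lusin-type theorem).**
For compact metric spaces `X`, `Y`, a Borel probability measure `μ` on `X`, a
Borel map `φ : X → Y` and `η > 0`, there is a Borel map `ψ : X → Y` with
`∫ d_Y(φ x, ψ x) dμ < η` and an open `U` with `μ(U) > 1 - η` on which `ψ` is
η-almost L-Lipschitz for some finite `L`. -/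
theorem exists_almost_lipschitz_approximation {X Y : Type*}
    [MetricSpace X] [CompactSpace X] [MetricSpace Y] [CompactSpace Y]
    [MeasurableSpace X] [BorelSpace X] [MeasurableSpace Y] [BorelSpace Y]
    (μ : Measure X) [IsProbabilityMeasure μ]
    (φ : X → Y) (hφ : Measurable φ) (η : ℝ) (hη : 0 < η) :
    ∃ ψ : X → Y, Measurable ψ ∧
      (∫ x, dist (φ x) (ψ x) ∂μ) < η ∧
      ∃ U : Set X, IsOpen U ∧ ENNReal.ofReal (1 - η) < μ U ∧
        ∃ L : ℝ, ∀ x ∈ U, ∀ x' ∈ U, dist (ψ x) (ψ x') ≤ η + L * dist x x' := by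
  have : Nonempty Y := ⟨φ (nonempty_of_isProbabilityMeasure μ).some⟩
  set D := diam (univ : Set Y)
  have hD : ∀ y y' : Y, dist y y' ≤ D := fun y y' =>
    dist_le_diam_of_mem isBounded_of_compactSpace (mem_univ y) (mem_univ y')
  have hD0 : 0 ≤ D := diam_nonneg
  -- The integral will be at most `ε μ(K) + D μ(Kᶜ) ≤ ε (1 + D)`; `ε < 1` keeps `μ K > 0`.
  obtain ⟨ε, hε, hεD⟩ : ∃ ε > 0, ε * (1 + D) < min η 1 := ⟨min η 1 / (D + 2), by positivity, by
    rw [div_mul_eq_mul_div, div_lt_iff₀ (by positivity)]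
    nlinarith [lt_min hη one_pos]⟩
  have hεη : ε < min η 1 := (le_mul_of_one_le_right hε.le (by linarith)).trans_lt hεD
  obtain ⟨K, hK, hKμ, δ, hδ, hφK⟩ := exists_isCompact_measure_compl_lt_and_dist_lt_of_measurable
    μ hφ hε (ENNReal.ofReal_pos.2 hε).ne'
  have hKε : μ.real Kᶜ < ε := ENNReal.toReal_lt_of_lt_ofReal hKμ
  obtain ⟨ψ, hψK, U, hU, hKU, hψU⟩ := hK.exists_simpleFunc_dist_lt_of_dist_lt hδ hφK
  refine ⟨ψ, ψ.measurable, ?_, U, hU, (ofReal_one_sub_lt_measure_of_measureReal_compl_lt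
    hK.measurableSet (hKε.trans hεη)).trans_le (measure_mono hKU), D / (δ / 3),
    dist_le_add_div_mul_of_dist_lt (by positivity) (fun x _ x' _ => hD _ _)
      fun x hx x' hx' hxx' => (hψU x hx x' hx' hxx').le.trans (hεη.le.trans (min_le_left η 1))⟩
  calc ∫ x, dist (φ x) (ψ x) ∂μ ≤ ε * μ.real K + D * μ.real Kᶜ :=
        integral_le_mul_measureReal_add_mul_measureReal_compl
          (hφ.dist ψ.measurable).aestronglyMeasurable hK.measurableSet
          (fun x hx => by simpa using (hψK x hx).le) fun x _ => by simpa using hD _ _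
    _ ≤ ε * 1 + D * ε := by gcongr; exact measureReal_le_one
    _ < η := by linarith [min_le_left η 1]
end

section
/- Let G be a countable group, Σ = (σ_n : G → Sym(V_n)) a sofic approximation, (𝒳,d) a compact metric space, and for x ∈ 𝒳^{V_n} let P^{σ_n}_x := (1/|V_n|) Σ_{v∈V_n} δ_{Π^{σ_n}_v(x)} be the empirical distribution on 𝒳^G. Then for every finite F ⊆ G and every g ∈ G: sup_{x ∈ 𝒳^{V_n}} ‖(P^{σ_n}_x)_F − (S^g_* P^{σ_n}_x)_F‖_{TV} → 0 as n → ∞, where (·)_F denotes the marginal on 𝒳^F and S is the right-shift action. -/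
/-! After reindexing by `v ↦ σ_g v`, both `F`-marginals are uniform averages of `|V|` Dirac
masses on `𝒳^F`, at `(x_{σ_h σ_g v})_{h ∈ F}` and at `(x_{σ_{hg} v})_{h ∈ F}` respectively. Two such
empirical measures are within total variation the proportion of indices where the atoms differ,
and here the atoms can differ only if `σ_h σ_g v ≠ σ_{hg} v` for some `h ∈ F`. This bound does not
depend on `x` and tends to `0` because `σ` is asymptotically multiplicative. -/

open MeasureTheory Filter Topology
open scoped ENNReal

/-- The right-shift action: `(S^g y) h = y (h * g)`. -/
def shiftMap (G : Type*) [Group G] (𝒳 : Type*) (g : G) : (G → 𝒳) → (G → 𝒳) :=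
  fun y h => y (h * g)

/-- The pullback name of `x : 𝒳^V` at `v` over `σ`: `(x_{σ^g(v)})_{g ∈ G}`. -/
def pullbackName {G W 𝒳 : Type*} (σ : G → Equiv.Perm W) (v : W) (x : W → 𝒳) : G → 𝒳 :=
  fun g => x (σ g v)

/-- The empirical distribution `P^σ_x = (1/|V|) Σ_v δ_{Π^σ_v(x)}` on `𝒳^G`. -/
noncomputable def empMeasure {G W 𝒳 : Type*} [Fintype W] [MeasurableSpace 𝒳]
    (σ : G → Equiv.Perm W) (x : W → 𝒳) : Measure (G → 𝒳) :=
  (Fintype.card W : ℝ≥0∞)⁻¹ • ∑ v : W, Measure.dirac (pullbackName σ v x)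

/-- The marginal of a measure on `𝒳^G` on the coordinates in a finite `F ⊆ G`. -/
noncomputable def marginalF {G 𝒳 : Type*} [MeasurableSpace 𝒳] (F : Finset G)
    (μ : Measure (G → 𝒳)) : Measure (↥F → 𝒳) :=
  μ.map fun y (h : ↥F) => y ↑h

/-- The total variation distance between two measures:
`sup_A |μ(A) − ν(A)|` over measurable sets `A`. -/
noncomputable def tvDist {Z : Type*} [MeasurableSpace Z] (μ ν : Measure Z) : ℝ :=
  ⨆ A : {A : Set Z // MeasurableSet A}, |(μ A.1).toReal - (ν A.1).toReal|

section Counting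

variable {W Z : Type*} [Finite W] (a b : W → Z) (s : Set Z)

lemma card_mem_le_card_mem_add_card_ne :
    Nat.card {v // a v ∈ s} ≤ Nat.card {v // b v ∈ s} + Nat.card {v // a v ≠ b v} := by
  classical
  have := Fintype.ofFinite W
  simp only [Nat.card_eq_fintype_card, Fintype.card_subtype]
  refine (Finset.card_le_card fun v hv => ?_).trans (Finset.card_union_le _ _)
  simp only [Finset.mem_filter, Finset.mem_union, Finset.mem_univ, true_and] at hv ⊢
  by_cases hab : a v = b v
  · exact Or.inl (hab ▸ hv)
  · exact Or.inr hab

lemma abs_card_mem_sub_card_mem_le :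
    |(Nat.card {v // a v ∈ s} : ℝ) - Nat.card {v // b v ∈ s}| ≤ Nat.card {v // a v ≠ b v} := by
  have hab := card_mem_le_card_mem_add_card_ne a b s
  have hba := card_mem_le_card_mem_add_card_ne b a s
  rw [Nat.card_congr (Equiv.subtypeEquivRight fun _ => ne_comm)] at hba
  rw [abs_sub_le_iff, sub_le_iff_le_add', sub_le_iff_le_add']
  exact ⟨mod_cast hab, mod_cast hba⟩

end Counting

noncomputable def empiricalMeasure {W Z : Type*} [Fintype W] [MeasurableSpace Z] (a : W → Z) :
    Measure Z :=
  (Fintype.card W : ℝ≥0∞)⁻¹ • ∑ v, Measure.dirac (a v)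

section EmpiricalMeasure

variable {W Z Y : Type*} [Fintype W] [MeasurableSpace Z] [MeasurableSpace Y]

lemma empiricalMeasure_comp_equiv (a : W → Z) (e : W ≃ W) :
    empiricalMeasure (a ∘ e) = empiricalMeasure a := by
  simp only [empiricalMeasure, Function.comp_apply, Equiv.sum_comp e fun v => Measure.dirac (a v)]

lemma empiricalMeasure_apply (a : W → Z) {s : Set Z} (hs : MeasurableSet s) :
    empiricalMeasure a s = (Fintype.card W : ℝ≥0∞)⁻¹ * Nat.card {v // a v ∈ s} := by
  classical
  simp [empiricalMeasure, Measure.finsetSum_apply, Measure.dirac_apply' _ hs,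
    Set.indicator_apply, Finset.sum_boole, Nat.card_eq_fintype_card, Fintype.card_subtype]

lemma map_empiricalMeasure {f : Z → Y} (hf : Measurable f) (a : W → Z) :
    (empiricalMeasure a).map f = empiricalMeasure (f ∘ a) := by
  ext s hs
  rw [Measure.map_apply hf hs, empiricalMeasure_apply _ (hf hs), empiricalMeasure_apply _ hs]
  rfl

lemma empiricalMeasure_apply_toReal (a : W → Z) {s : Set Z} (hs : MeasurableSet s) :
    (empiricalMeasure a s).toReal = Nat.card {v // a v ∈ s} / Fintype.card W := by
  simp [empiricalMeasure_apply a hs, div_eq_inv_mul]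

lemma tvDist_empiricalMeasure_le (a b : W → Z) :
    tvDist (empiricalMeasure a) (empiricalMeasure b)
      ≤ Nat.card {v // a v ≠ b v} / Fintype.card W := by
  refine Real.iSup_le (fun ⟨s, hs⟩ => ?_) (by positivity)
  rw [empiricalMeasure_apply_toReal a hs, empiricalMeasure_apply_toReal b hs, ← sub_div,
    abs_div, Nat.abs_cast]
  gcongr
  exact abs_card_mem_sub_card_mem_le a b s

end EmpiricalMeasure

lemma tvDist_nonneg {Z : Type*} [MeasurableSpace Z] (μ ν : Measure Z) : 0 ≤ tvDist μ ν :=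
  Real.iSup_nonneg fun _ => abs_nonneg _

lemma tendsto_card_not_div_of_tendsto_card_div {W : ℕ → Type*} [∀ n, Finite (W n)]
    (P : ∀ n, W n → Prop)
    (h : Tendsto (fun n => (Nat.card {v // P n v} : ℝ) / Nat.card (W n)) atTop (𝓝 1)) :
    Tendsto (fun n => (Nat.card {v // ¬ P n v} : ℝ) / Nat.card (W n)) atTop (𝓝 0) := by
  have hle : ∀ n, (Nat.card {v // ¬ P n v} : ℝ) / Nat.card (W n)
      ≤ 1 - Nat.card {v // P n v} / Nat.card (W n) := fun n => by
    classical
    have hsum : (Nat.card {v // P n v} : ℝ) + Nat.card {v // ¬ P n v} = Nat.card (W n) := by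
      exact_mod_cast Nat.card_sum.symm.trans (Nat.card_congr (Equiv.sumCompl (P n)))
    rw [le_sub_iff_add_le, ← add_div, add_comm, hsum]
    exact div_self_le_one _
  refine tendsto_of_tendsto_of_tendsto_of_le_of_le tendsto_const_nhds ?_
    (fun n => by positivity) hle
  simpa using h.const_sub 1

section Sofic

variable {G W 𝒳 : Type*} (σ : G → Equiv.Perm W)

lemma empMeasure_eq_empiricalMeasure [Fintype W] [MeasurableSpace 𝒳] (x : W → 𝒳) :
    empMeasure σ x = empiricalMeasure (pullbackName σ · x) :=
  rfl

lemma marginalF_eq_map_restrict [MeasurableSpace 𝒳] (F : Finset G) (μ : Measure (G → 𝒳)) :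
    marginalF F μ = μ.map F.restrict :=
  rfl

lemma card_restrict_pullbackName_ne_le [Group G] [Finite W] (x : W → 𝒳) (F : Finset G) (g : G) :
    Nat.card {v // F.restrict (pullbackName σ (σ g v) x)
        ≠ F.restrict (shiftMap G 𝒳 g (pullbackName σ v x))}
      ≤ ∑ h ∈ F, Nat.card {v // σ h (σ g v) ≠ σ (h * g) v} := by
  classical
  have := Fintype.ofFinite W
  simp only [Nat.card_eq_fintype_card, Fintype.card_subtype]
  refine (Finset.card_le_card fun v hv => ?_).trans Finset.card_biUnion_le
  simp only [Finset.mem_filter, Finset.mem_univ, true_and, Finset.mem_biUnion] at hv ⊢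
  contrapose! hv
  funext h
  simp only [Finset.restrict, pullbackName, shiftMap, hv h h.2]

lemma tvDist_marginalF_shift_empMeasure_le [Group G] [Fintype W] [MeasurableSpace 𝒳] (x : W → 𝒳)
    (F : Finset G) (g : G) :
    tvDist (marginalF F (empMeasure σ x)) (marginalF F ((empMeasure σ x).map (shiftMap G 𝒳 g)))
      ≤ (∑ h ∈ F, (Nat.card {v // σ h (σ g v) ≠ σ (h * g) v} : ℝ)) / Fintype.card W := by
  have hshift : Measurable (shiftMap G 𝒳 g) :=
    measurable_pi_lambda _ fun _ => measurable_pi_apply _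
  have hP : marginalF F (empMeasure σ x)
      = empiricalMeasure fun v => F.restrict (pullbackName σ (σ g v) x) :=
    (map_empiricalMeasure F.measurable_restrict (pullbackName σ · x)).trans
      (empiricalMeasure_comp_equiv _ (σ g)).symm
  have hQ : marginalF F ((empMeasure σ x).map (shiftMap G 𝒳 g))
      = empiricalMeasure fun v => F.restrict (shiftMap G 𝒳 g (pullbackName σ v x)) := by
    rw [marginalF_eq_map_restrict, empMeasure_eq_empiricalMeasure, map_empiricalMeasure hshift,
      map_empiricalMeasure F.measurable_restrict]
    rfl
  rw [hP, hQ]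
  refine (tvDist_empiricalMeasure_le _ _).trans ?_
  gcongr
  exact_mod_cast card_restrict_pullbackName_ne_le σ x F g

end Sofic

theorem empirical_approx_invariant_general {G 𝒳 : Type*} [Group G]
    [MeasurableSpace 𝒳]
    (V : ℕ → Type*) [∀ n, Fintype (V n)]
    (σ : ∀ n, G → Equiv.Perm (V n))
    (hσ1 : ∀ g h : G,
      Tendsto (fun n => (Nat.card {v : V n // σ n g (σ n h v) = σ n (g * h) v} : ℝ)
          / (Nat.card (V n))) atTop (𝓝 1)) :
    ∀ (F : Finset G) (g : G),
      Tendsto (fun n => ⨆ x : V n → 𝒳,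
          tvDist (marginalF F (empMeasure (σ n) x))
            (marginalF F ((empMeasure (σ n) x).map (shiftMap G 𝒳 g))))
        atTop (𝓝 (0 : ℝ)) := by
  intro F g
  have hdefect : ∀ h ∈ F, Tendsto (fun n =>
      (Nat.card {v : V n // σ n h (σ n g v) ≠ σ n (h * g) v} : ℝ) / Nat.card (V n))
      atTop (𝓝 0) :=
    fun h _ => tendsto_card_not_div_of_tendsto_card_div _ (hσ1 h g)
  have hbound := tendsto_finsetSum F hdefect
  simp only [Finset.sum_const_zero, ← Finset.sum_div, Nat.card_eq_fintype_card] at hbound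
  refine tendsto_of_tendsto_of_tendsto_of_le_of_le tendsto_const_nhds hbound
    (fun n => Real.iSup_nonneg fun x => tvDist_nonneg _ _) (fun n => ?_)
  exact Real.iSup_le (fun x => tvDist_marginalF_shift_empMeasure_le (σ n) x F g) (by positivity)

/-- **Approximate shift-invariance of empirical distributions.**
Over a sofic approximation `Σ`, for every finite `F ⊆ G` and `g ∈ G`,
`sup_{x ∈ 𝒳^{V_n}} ‖(P^{σ_n}_x)_F − (S^g_* P^{σ_n}_x)_F‖_{TV} → 0`. -/
theorem empirical_approx_invariant {G 𝒳 : Type*} [Group G] [Countable G]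
    [MetricSpace 𝒳] [CompactSpace 𝒳] [MeasurableSpace 𝒳] [BorelSpace 𝒳]
    (V : ℕ → Type*) [∀ n, Fintype (V n)] [∀ n, Nonempty (V n)]
    (σ : ∀ n, G → Equiv.Perm (V n))
    (hσ1 : ∀ g h : G,
      Tendsto (fun n => (Nat.card {v : V n // σ n g (σ n h v) = σ n (g * h) v} : ℝ)
          / (Nat.card (V n))) atTop (𝓝 1))
    (hσ2 : ∀ g : G, g ≠ 1 →
      Tendsto (fun n => (Nat.card {v : V n // σ n g v ≠ v} : ℝ)
          / (Nat.card (V n))) atTop (𝓝 1)) :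
    ∀ (F : Finset G) (g : G),
      Tendsto (fun n => ⨆ x : V n → 𝒳,
          tvDist (marginalF F (empMeasure (σ n) x))
            (marginalF F ((empMeasure (σ n) x).map (shiftMap G 𝒳 g))))
        atTop (𝓝 (0 : ℝ)) :=
  empirical_approx_invariant_general V σ hσ1
end
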